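/- Let P_1,...,P_n be M×M row-stochastic matrices and suppose each P_i = β_i·A_i + (1−β_i)·B_i with β_i ∈ [0,1], A_i row-stochastic, and B_i row-stochastic with identical rows. Then for W ~ p_W on {1,...,M} and W_n obtained from W through the channel ∏_{i=1}^n P_i, I(W; W_n) ≤ (∏_{i=1}^n β_i)·H(W) ≤ (∏_{i=1}^n β_i)·log M. -/
import Mathlib


def RowStochastic {M : ℕ} (Q : Matrix (Fin M) (Fin M) ℝ) : Prop :=
  (∀ j k, 0 ≤ Q j k) ∧ ∀ j, ∑ k, Q j k = 1

def IdenticalRows {M : ℕ} (Q : Matrix (Fin M) (Fin M) ℝ) : Prop :=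
  ∀ j j' k, Q j k = Q j' k

/-- Shannon mutual information between an input with distribution `p` and the output of
the channel with transition matrix `Q` (convention `Real.log 0 = 0`). -/
noncomputable def mutualInfo {M : ℕ} (p : Fin M → ℝ) (Q : Matrix (Fin M) (Fin M) ℝ) : ℝ :=
  ∑ j, ∑ k, p j * Q j k * Real.log (Q j k / ∑ j', p j' * Q j' k)

/-- Shannon entropy `H(W)` of the distribution `p`. -/
noncomputable def entropy {M : ℕ} (p : Fin M → ℝ) : ℝ :=
  ∑ j, Real.negMulLog (p j)

open Finset

/-- per-term estimate used in the log-sum inequality -/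
private lemma aux_term (x y s t : ℝ) (hx : 0 ≤ x) (hy : 0 ≤ y) (hxy : y = 0 → x = 0)
    (hs : 0 < s) (ht : 0 < t) :
    x - y * s / t ≤ x * Real.log (x / y) - x * Real.log (s / t) := by
  rcases eq_or_lt_of_le hx with h | hx'
  · rw [← h]
    simp only [zero_mul, sub_zero, zero_sub, neg_nonpos, zero_mul, sub_self]
    have : 0 ≤ y * s / t := by positivity
    linarith
  · have hy' : 0 < y := by
      rcases eq_or_lt_of_le hy with h | h
      · exact absurd (hxy h.symm) (by linarith)
      · exact h
    have key : Real.log ((y * s) / (x * t)) ≤ (y * s) / (x * t) - 1 :=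
      Real.log_le_sub_one_of_pos (by positivity)
    have hlog : x * Real.log (x / y) - x * Real.log (s / t)
        = -(x * Real.log ((y * s) / (x * t))) := by
      rw [Real.log_div (by positivity) (by positivity),
          Real.log_div (by positivity) (by positivity),
          Real.log_div (by positivity) (by positivity),
          Real.log_mul (by positivity) (by positivity),
          Real.log_mul (by positivity) (by positivity)]
      ring
    rw [hlog]
    have h2 : x * Real.log ((y * s) / (x * t)) ≤ x * ((y * s) / (x * t) - 1) :=
      mul_le_mul_of_nonneg_left key hx
    have h3 : x * ((y * s) / (x * t) - 1) = y * s / t - x := by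
      field_simp
    linarith

/-- two-term log-sum inequality (with the `log 0 = 0` convention) -/
private lemma logsum2 (x₁ x₂ y₁ y₂ : ℝ) (hx₁ : 0 ≤ x₁) (hx₂ : 0 ≤ x₂)
    (hy₁ : 0 ≤ y₁) (hy₂ : 0 ≤ y₂) (h₁ : y₁ = 0 → x₁ = 0) (h₂ : y₂ = 0 → x₂ = 0) :
    (x₁ + x₂) * Real.log ((x₁ + x₂) / (y₁ + y₂)) ≤
      x₁ * Real.log (x₁ / y₁) + x₂ * Real.log (x₂ / y₂) := by
  rcases eq_or_lt_of_le (add_nonneg hx₁ hx₂) with hs | hs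
  · have e1 : x₁ = 0 := by linarith
    have e2 : x₂ = 0 := by linarith
    simp [e1, e2]
  · have ht : 0 < y₁ + y₂ := by
      rcases eq_or_lt_of_le (add_nonneg hy₁ hy₂) with h | h
      · have e1 : y₁ = 0 := by linarith
        have e2 : y₂ = 0 := by linarith
        have := h₁ e1; have := h₂ e2; linarith
      · exact h
    have t1 := aux_term x₁ y₁ (x₁ + x₂) (y₁ + y₂) hx₁ hy₁ h₁ hs ht
    have t2 := aux_term x₂ y₂ (x₁ + x₂) (y₁ + y₂) hx₂ hy₂ h₂ hs ht
    have hsum : y₁ * (x₁ + x₂) / (y₁ + y₂) + y₂ * (x₁ + x₂) / (y₁ + y₂) = x₁ + x₂ := by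
      field_simp
    have expand : (x₁ + x₂) * Real.log ((x₁ + x₂) / (y₁ + y₂))
        = x₁ * Real.log ((x₁ + x₂) / (y₁ + y₂)) + x₂ * Real.log ((x₁ + x₂) / (y₁ + y₂)) := by
      ring
    linarith

private lemma sum_term_zero {M : ℕ} {f : Fin M → ℝ} (h : ∑ j, f j = 0)
    (h0 : ∀ j, 0 ≤ f j) (j : Fin M) : f j = 0 :=
  (Finset.sum_eq_zero_iff_of_nonneg (fun i _ => h0 i)).mp h j (Finset.mem_univ j)

/-- convexity of mutual information in the channel -/
private lemma mi_convex {M : ℕ} (p : Fin M → ℝ) (hp0 : ∀ j, 0 ≤ p j)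
    (A B : Matrix (Fin M) (Fin M) ℝ) (hA0 : ∀ j k, 0 ≤ A j k) (hB0 : ∀ j k, 0 ≤ B j k)
    (β : ℝ) (hβ0 : 0 ≤ β) (hβ1 : β ≤ 1) :
    mutualInfo p (β • A + (1 - β) • B) ≤ β * mutualInfo p A + (1 - β) * mutualInfo p B := by
  unfold mutualInfo
  rw [Finset.mul_sum, Finset.mul_sum, ← Finset.sum_add_distrib]
  refine Finset.sum_le_sum fun j _ => ?_
  rw [Finset.mul_sum, Finset.mul_sum, ← Finset.sum_add_distrib]
  refine Finset.sum_le_sum fun k _ => ?_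
  set a := ∑ j', p j' * A j' k with ha
  set b := ∑ j', p j' * B j' k with hb
  have ha0 : 0 ≤ a := Finset.sum_nonneg fun i _ => mul_nonneg (hp0 i) (hA0 i k)
  have hb0 : 0 ≤ b := Finset.sum_nonneg fun i _ => mul_nonneg (hp0 i) (hB0 i k)
  have hQapp : ∀ j', (β • A + (1 - β) • B) j' k = β * A j' k + (1 - β) * B j' k := by
    intro j'
    simp [Matrix.add_apply, Matrix.smul_apply, smul_eq_mul]
  have hq : (∑ j', p j' * (β • A + (1 - β) • B) j' k) = β * a + (1 - β) * b := by
    simp only [hQapp]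
    rw [ha, hb, Finset.mul_sum, Finset.mul_sum, ← Finset.sum_add_distrib]
    refine Finset.sum_congr rfl fun i _ => ?_
    ring
  rw [hq, hQapp]
  have key := logsum2 (β * (p j * A j k)) ((1 - β) * (p j * B j k))
      (β * (p j * a)) ((1 - β) * (p j * b))
      (mul_nonneg hβ0 (mul_nonneg (hp0 j) (hA0 j k)))
      (mul_nonneg (by linarith) (mul_nonneg (hp0 j) (hB0 j k)))
      (mul_nonneg hβ0 (mul_nonneg (hp0 j) ha0))
      (mul_nonneg (by linarith) (mul_nonneg (hp0 j) hb0))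
      (fun h => by
        rcases mul_eq_zero.mp h with h | h
        · rw [h, zero_mul]
        · rcases mul_eq_zero.mp h with h | h
          · rw [h]; ring
          · have : p j * A j k = 0 :=
              sum_term_zero (h ▸ ha.symm) (fun i => mul_nonneg (hp0 i) (hA0 i k)) j
            rw [this, mul_zero])
      (fun h => by
        rcases mul_eq_zero.mp h with h | h
        · rw [h, zero_mul]
        · rcases mul_eq_zero.mp h with h | h
          · rw [h]; ring
          · have : p j * B j k = 0 :=
              sum_term_zero (h ▸ hb.symm) (fun i => mul_nonneg (hp0 i) (hB0 i k)) j
            rw [this, mul_zero])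
  have e0 : β * (p j * A j k) + (1 - β) * (p j * B j k)
      = p j * (β * A j k + (1 - β) * B j k) := by ring
  have e0' : β * (p j * a) + (1 - β) * (p j * b) = p j * (β * a + (1 - β) * b) := by ring
  rw [e0, e0'] at key
  have lhs_eq : p j * (β * A j k + (1 - β) * B j k)
        * Real.log ((β * A j k + (1 - β) * B j k) / (β * a + (1 - β) * b))
      = p j * (β * A j k + (1 - β) * B j k)
        * Real.log (p j * (β * A j k + (1 - β) * B j k) / (p j * (β * a + (1 - β) * b))) := by
    rcases eq_or_ne (p j) 0 with h | h
    · rw [h]; ring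
    · rw [mul_div_mul_left _ _ h]
  have rhs1 : β * (p j * A j k) * Real.log (β * (p j * A j k) / (β * (p j * a)))
      = β * (p j * A j k * Real.log (A j k / a)) := by
    rcases eq_or_ne (β * p j) 0 with h | h
    · rcases mul_eq_zero.mp h with h | h
      · rw [h]; ring
      · rw [h]; ring
    · have e : β * (p j * A j k) / (β * (p j * a)) = A j k / a := by
        rw [← mul_assoc, ← mul_assoc, mul_div_mul_left _ _ h]
      rw [e]; ring
  have rhs2 : (1 - β) * (p j * B j k)
        * Real.log ((1 - β) * (p j * B j k) / ((1 - β) * (p j * b)))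
      = (1 - β) * (p j * B j k * Real.log (B j k / b)) := by
    rcases eq_or_ne ((1 - β) * p j) 0 with h | h
    · rcases mul_eq_zero.mp h with h | h
      · rw [h]; ring
      · rw [h]; ring
    · have e : (1 - β) * (p j * B j k) / ((1 - β) * (p j * b)) = B j k / b := by
        rw [← mul_assoc, ← mul_assoc, mul_div_mul_left _ _ h]
      rw [e]; ring
  rw [rhs1, rhs2] at key
  calc p j * (β * A j k + (1 - β) * B j k)
        * Real.log ((β * A j k + (1 - β) * B j k) / (β * a + (1 - β) * b))
      = p j * (β * A j k + (1 - β) * B j k)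
        * Real.log (p j * (β * A j k + (1 - β) * B j k) / (p j * (β * a + (1 - β) * b))) :=
        lhs_eq
    _ ≤ β * (p j * A j k * Real.log (A j k / a))
        + (1 - β) * (p j * B j k * Real.log (B j k / b)) := key

/-- mutual information vanishes for a channel with identical rows -/
private lemma mi_identical {M : ℕ} (p : Fin M → ℝ) (hp1 : ∑ j, p j = 1)
    (B : Matrix (Fin M) (Fin M) ℝ) (hB : IdenticalRows B) :
    mutualInfo p B = 0 := by
  unfold mutualInfo
  refine Finset.sum_eq_zero fun j _ => Finset.sum_eq_zero fun k _ => ?_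
  have hq : (∑ j', p j' * B j' k) = B j k := by
    calc (∑ j', p j' * B j' k) = ∑ j', p j' * B j k :=
          Finset.sum_congr rfl fun i _ => by rw [hB i j k]
      _ = (∑ j', p j') * B j k := by rw [Finset.sum_mul]
      _ = B j k := by rw [hp1, one_mul]
  rw [hq]
  rcases eq_or_ne (B j k) 0 with h | h
  · rw [h]; ring
  · rw [div_self h, Real.log_one, mul_zero]

/-- data processing-type bound: mutual information is at most the input entropy -/
private lemma mi_le_entropy {M : ℕ} (p : Fin M → ℝ) (hp0 : ∀ j, 0 ≤ p j)
    (A : Matrix (Fin M) (Fin M) ℝ) (hA : RowStochastic A) :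
    mutualInfo p A ≤ entropy p := by
  unfold mutualInfo entropy
  refine Finset.sum_le_sum fun j _ => ?_
  have step1 : ∀ k, p j * A j k * Real.log (A j k / ∑ j', p j' * A j' k)
      ≤ p j * A j k * Real.log (p j)⁻¹ := by
    intro k
    rcases eq_or_lt_of_le (mul_nonneg (hp0 j) (hA.1 j k)) with h | h
    · rw [← h]; simp
    · have hpj : 0 < p j := lt_of_le_of_ne (hp0 j) (by
        intro h'; rw [← h'] at h; simp at h)
      have hAjk : 0 < A j k := lt_of_le_of_ne (hA.1 j k) (by
        intro h'; rw [← h'] at h; simp at h)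
      have hsingle : p j * A j k ≤ ∑ j', p j' * A j' k :=
        Finset.single_le_sum (f := fun i => p i * A i k)
          (fun i _ => mul_nonneg (hp0 i) (hA.1 i k)) (Finset.mem_univ j)
      have hak : 0 < ∑ j', p j' * A j' k := lt_of_lt_of_le h hsingle
      have hle : A j k / (∑ j', p j' * A j' k) ≤ (p j)⁻¹ := by
        rw [inv_eq_one_div, div_le_div_iff₀ hak hpj]
        nlinarith
      have hlog := Real.log_le_log (by positivity) hle
      exact mul_le_mul_of_nonneg_left hlog (le_of_lt h)
  calc (∑ k, p j * A j k * Real.log (A j k / ∑ j', p j' * A j' k))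
      ≤ ∑ k, p j * A j k * Real.log (p j)⁻¹ := Finset.sum_le_sum fun k _ => step1 k
    _ = (p j * Real.log (p j)⁻¹) * ∑ k, A j k := by
        rw [Finset.mul_sum]
        exact Finset.sum_congr rfl fun k _ => by ring
    _ = p j * Real.log (p j)⁻¹ := by rw [hA.2 j, mul_one]
    _ = Real.negMulLog (p j) := by rw [Real.log_inv, Real.negMulLog]; ring

/-- entropy bound -/
private lemma entropy_le_log {M : ℕ} (hM : 0 < M) (p : Fin M → ℝ) (hp0 : ∀ j, 0 ≤ p j)
    (hp1 : ∑ j, p j = 1) : entropy p ≤ Real.log M := by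
  unfold entropy
  have key : ∀ j, Real.negMulLog (p j) - p j * Real.log M ≤ (M : ℝ)⁻¹ - p j := by
    intro j
    rcases eq_or_lt_of_le (hp0 j) with h | h
    · rw [← h]
      have hMnn : (0:ℝ) ≤ (M:ℝ)⁻¹ := by positivity
      simpa [Real.negMulLog] using hMnn
    · have hM' : (0 : ℝ) < M := by exact_mod_cast hM
      have key2 : Real.log (M * p j) ≤ M * p j - 1 :=
        Real.log_le_sub_one_of_pos (by positivity)
      have e : Real.negMulLog (p j) - p j * Real.log M = -(p j * Real.log (M * p j)) := by
        rw [Real.log_mul (by positivity) (by positivity), Real.negMulLog]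
        ring
      rw [e]
      have h2 : p j * Real.log (M * p j) ≥ p j * (1 - (M * p j)⁻¹) := by
        have := Real.log_le_sub_one_of_pos (x := (M * p j)⁻¹) (by positivity)
        rw [Real.log_inv] at this
        nlinarith
      have h3 : p j * (1 - (M * p j)⁻¹) = p j - (M : ℝ)⁻¹ := by
        field_simp
      nlinarith
  have sum_key : (∑ j, Real.negMulLog (p j)) - (∑ j, p j) * Real.log M
      ≤ (M : ℝ) * (M : ℝ)⁻¹ - ∑ j, p j := by
    have := Finset.sum_le_sum fun j (_ : j ∈ Finset.univ) => key j
    rw [Finset.sum_sub_distrib] at this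
    have e1 : (∑ j : Fin M, ((M : ℝ)⁻¹ - p j)) = (M : ℝ) * (M : ℝ)⁻¹ - ∑ j, p j := by
      rw [Finset.sum_sub_distrib, Finset.sum_const, Finset.card_univ, Fintype.card_fin,
        nsmul_eq_mul]
    have e2 : (∑ j : Fin M, p j * Real.log M) = (∑ j, p j) * Real.log M := by
      rw [Finset.sum_mul]
    rw [e1] at this
    rw [← e2]
    exact this
  have hM' : (0 : ℝ) < M := by exact_mod_cast hM
  rw [hp1, one_mul, mul_inv_cancel₀ (ne_of_gt hM')] at sum_key
  linarith

/-- mixture decomposition -/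
def IsMix {M : ℕ} (β : ℝ) (Q : Matrix (Fin M) (Fin M) ℝ) : Prop :=
  0 ≤ β ∧ β ≤ 1 ∧ ∃ A B : Matrix (Fin M) (Fin M) ℝ,
    RowStochastic A ∧ RowStochastic B ∧ IdenticalRows B ∧ Q = β • A + (1 - β) • B

private lemma rowStochastic_mul {M : ℕ} {X Y : Matrix (Fin M) (Fin M) ℝ}
    (hX : RowStochastic X) (hY : RowStochastic Y) : RowStochastic (X * Y) := by
  constructor
  · intro j k
    rw [Matrix.mul_apply]
    exact Finset.sum_nonneg fun l _ => mul_nonneg (hX.1 j l) (hY.1 l k)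
  · intro j
    simp only [Matrix.mul_apply]
    rw [Finset.sum_comm]
    calc (∑ l, ∑ k, X j l * Y l k) = ∑ l, X j l * ∑ k, Y l k := by
          refine Finset.sum_congr rfl fun l _ => ?_
          rw [Finset.mul_sum]
      _ = ∑ l, X j l := Finset.sum_congr rfl fun l _ => by rw [hY.2 l, mul_one]
      _ = 1 := hX.2 j

private lemma identRows_mul_left {M : ℕ} {X Y : Matrix (Fin M) (Fin M) ℝ}
    (hX : IdenticalRows X) : IdenticalRows (X * Y) := by
  intro j j' k
  simp only [Matrix.mul_apply]
  exact Finset.sum_congr rfl fun l _ => by rw [hX j j' l]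

private lemma mul_identRows {M : ℕ} {X Y : Matrix (Fin M) (Fin M) ℝ}
    (hX : RowStochastic X) (hY : IdenticalRows Y) : IdenticalRows (X * Y) := by
  intro j j' k
  have e : ∀ i : Fin M, (X * Y) i k = Y i k := by
    intro i
    rw [Matrix.mul_apply]
    calc (∑ l, X i l * Y l k) = ∑ l, X i l * Y i k :=
          Finset.sum_congr rfl fun l _ => by rw [hY l i k]
      _ = (∑ l, X i l) * Y i k := by rw [Finset.sum_mul]
      _ = Y i k := by rw [hX.2 i, one_mul]
  rw [e j, e j', hY j j' k]

private lemma rowStochastic_combo {M : ℕ} {X Y : Matrix (Fin M) (Fin M) ℝ}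
    (hX : RowStochastic X) (hY : RowStochastic Y) {c : ℝ} (hc0 : 0 ≤ c) (hc1 : c ≤ 1) :
    RowStochastic (c • X + (1 - c) • Y) := by
  constructor
  · intro j k
    simp only [Matrix.add_apply, Matrix.smul_apply, smul_eq_mul]
    have := hX.1 j k; have := hY.1 j k
    nlinarith
  · intro j
    simp only [Matrix.add_apply, Matrix.smul_apply, smul_eq_mul]
    rw [Finset.sum_add_distrib, ← Finset.mul_sum, ← Finset.mul_sum, hX.2 j, hY.2 j]
    ring

private lemma isMix_one {M : ℕ} (hM : 0 < M) : IsMix (1 : ℝ) (1 : Matrix (Fin M) (Fin M) ℝ) := by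
  refine ⟨zero_le_one, le_refl 1, 1, Matrix.of fun _ _ => (M : ℝ)⁻¹, ?_, ?_, ?_, ?_⟩
  · constructor
    · intro j k
      rw [Matrix.one_apply]
      split <;> norm_num
    · intro j
      simp [Matrix.one_apply]
  · constructor
    · intro j k
      simp only [Matrix.of_apply]
      positivity
    · intro j
      simp only [Matrix.of_apply, Finset.sum_const, Finset.card_univ, Fintype.card_fin,
        nsmul_eq_mul]
      rw [mul_inv_cancel₀ (Nat.cast_ne_zero.mpr hM.ne' : (M:ℝ) ≠ 0)]
  · intro j j' k; rfl
  · simp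

private lemma isMix_mul {M : ℕ} (hM : 0 < M) {β β' : ℝ}
    {P P' : Matrix (Fin M) (Fin M) ℝ} (h : IsMix β P) (h' : IsMix β' P') :
    IsMix (β * β') (P * P') := by
  obtain ⟨hβ0, hβ1, A, B, hA, hB, hBr, hPeq⟩ := h
  obtain ⟨hβ0', hβ1', A', B', hA', hB', hBr', hPeq'⟩ := h'
  have hP : RowStochastic P := by
    rw [hPeq]; exact rowStochastic_combo hA hB hβ0 hβ1
  have hP' : RowStochastic P' := by
    rw [hPeq']; exact rowStochastic_combo hA' hB' hβ0' hβ1'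
  refine ⟨mul_nonneg hβ0 hβ0', mul_le_one₀ hβ1 hβ0' hβ1', A * A', ?_⟩
  -- decompose the product
  have expand : P * P' = (β * β') • (A * A')
      + ((β * (1 - β')) • (A * B') + (1 - β) • (B * P')) := by
    rw [hPeq]
    nth_rewrite 1 [hPeq']
    rw [Matrix.add_mul, Matrix.mul_add, Matrix.smul_mul, Matrix.smul_mul, Matrix.smul_mul,
      Matrix.mul_smul, Matrix.mul_smul, ← hPeq', smul_smul, smul_smul]
    abel
  -- the remainder is (1 - β*β') times an identical-rows row-stochastic matrix
  have hAB' : RowStochastic (A * B') := rowStochastic_mul hA hB'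
  have hBP' : RowStochastic (B * P') := rowStochastic_mul hB hP'
  have hAB'r : IdenticalRows (A * B') := mul_identRows hA hBr'
  have hBP'r : IdenticalRows (B * P') := identRows_mul_left hBr
  have hc1 : 0 ≤ β * (1 - β') := mul_nonneg hβ0 (by linarith)
  have hc2 : 0 ≤ 1 - β := by linarith
  have hcsum : β * (1 - β') + (1 - β) = 1 - β * β' := by ring
  rcases eq_or_lt_of_le (le_trans (by linarith : (0:ℝ) ≤ β * (1 - β') + (1 - β))
      (le_of_eq hcsum)) with hz | hz
  · -- 1 - β*β' = 0 : remainder vanishes, use uniform row matrix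
    have hz' : 1 - β * β' = 0 := hz.symm
    have hsum0 : β * (1 - β') + (1 - β) = 0 := by rw [hcsum, ← hz']
    have h1 : β * (1 - β') = 0 := by linarith
    have h2 : (1 : ℝ) - β = 0 := by linarith
    refine ⟨Matrix.of fun _ _ => (M : ℝ)⁻¹, rowStochastic_mul hA hA', ?_, ?_, ?_⟩
    · constructor
      · intro j k
        simp only [Matrix.of_apply]
        positivity
      · intro j
        simp only [Matrix.of_apply, Finset.sum_const, Finset.card_univ, Fintype.card_fin,
          nsmul_eq_mul]
        rw [mul_inv_cancel₀ (Nat.cast_ne_zero.mpr hM.ne' : (M:ℝ) ≠ 0)]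
    · intro j j' k; rfl
    · rw [expand, h1, h2, hz']
      simp
  · -- 1 - β*β' > 0
    set c := 1 - β * β' with hc
    refine ⟨(β * (1 - β') / c) • (A * B') + ((1 - β) / c) • (B * P'),
      rowStochastic_mul hA hA', ?_, ?_, ?_⟩
    · have e : (1 : ℝ) - β * (1 - β') / c = (1 - β) / c := by
        field_simp
        linarith
      have := rowStochastic_combo hAB' hBP' (c := β * (1 - β') / c)
        (by positivity) (by rw [div_le_one hz]; linarith)
      rw [e] at this
      exact this
    · intro j j' k
      simp only [Matrix.add_apply, Matrix.smul_apply, smul_eq_mul]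
      rw [hAB'r j j' k, hBP'r j j' k]
    · rw [expand]
      congr 1
      rw [smul_add, smul_smul, smul_smul]
      congr 2
      · field_simp
      · field_simp

private lemma isMix_prod {M : ℕ} (hM : 0 < M) : ∀ {n : ℕ}
    (P : Fin n → Matrix (Fin M) (Fin M) ℝ) (β : Fin n → ℝ),
    (∀ i, IsMix (β i) (P i)) → IsMix (∏ i, β i) (List.ofFn P).prod := by
  intro n
  induction n with
  | zero =>
    intro P β _
    simpa using isMix_one hM
  | succ n ih =>
    intro P β hmix
    rw [List.ofFn_succ, List.prod_cons, Fin.prod_univ_succ]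
    exact isMix_mul hM (hmix 0) (ih _ _ fun i => hmix i.succ)

theorem stmt_5 {M n : ℕ} (p : Fin M → ℝ) (hp0 : ∀ j, 0 ≤ p j) (hp1 : ∑ j, p j = 1)
    (P A B : Fin n → Matrix (Fin M) (Fin M) ℝ) (β : Fin n → ℝ)
    (hP : ∀ i, RowStochastic (P i))
    (hA : ∀ i, RowStochastic (A i)) (hB : ∀ i, RowStochastic (B i))
    (hBrows : ∀ i, IdenticalRows (B i))
    (hβ : ∀ i, β i ∈ Set.Icc (0 : ℝ) 1)
    (hdecomp : ∀ i, P i = β i • A i + (1 - β i) • B i) :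
    mutualInfo p (List.ofFn P).prod ≤ (∏ i, β i) * entropy p ∧
      (∏ i, β i) * entropy p ≤ (∏ i, β i) * Real.log M := by
  have hM : 0 < M := by
    rcases Nat.eq_zero_or_pos M with h | h
    · subst h; simp at hp1
    · exact h
  have hmix : ∀ i, IsMix (β i) (P i) := fun i =>
    ⟨(hβ i).1, (hβ i).2, A i, B i, hA i, hB i, hBrows i, hdecomp i⟩
  obtain ⟨hb0, hb1, A', B', hA', hB', hBr', heq⟩ := isMix_prod hM P β hmix
  have hprod0 : 0 ≤ ∏ i, β i := hb0
  constructor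
  · rw [heq]
    calc mutualInfo p ((∏ i, β i) • A' + (1 - ∏ i, β i) • B')
        ≤ (∏ i, β i) * mutualInfo p A' + (1 - ∏ i, β i) * mutualInfo p B' :=
          mi_convex p hp0 A' B' hA'.1 hB'.1 _ hb0 hb1
      _ = (∏ i, β i) * mutualInfo p A' := by
          rw [mi_identical p hp1 B' hBr', mul_zero, add_zero]
      _ ≤ (∏ i, β i) * entropy p :=
          mul_le_mul_of_nonneg_left (mi_le_entropy p hp0 A' hA') hprod0
  · exact mul_le_mul_of_nonneg_left (entropy_le_log hM p hp0 hp1) hprod0
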